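/- Every two-dimensional matroid polytope has exactly 3 or exactly 4 vertices; that is, every two-dimensional matroid polytope is combinatorially equivalent to a triangle or a square. -/

import Mathlib

open Finset Module

/-- The 0-1 indicator vector `δ_B ∈ ℝ^S` of a finite subset `B` of `S`. -/
def delta {S : Type} [DecidableEq S] (B : Finset S) : S → ℝ := fun i => if i ∈ B then 1 else 0

/-- A matroid of rank `k` on `S`, given by its collection of bases: a nonempty collection of
`k`-element subsets satisfying the exchange property. -/
def IsMatroid {S : Type} [DecidableEq S] (k : ℕ) (M : Finset (Finset S)) : Prop :=
  M.Nonempty ∧ (∀ I ∈ M, I.card = k) ∧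
    ∀ I ∈ M, ∀ J ∈ M, I ≠ J → ∀ i ∈ I \ J, ∃ j ∈ J \ I, insert j (I.erase i) ∈ M

/-- The matroid polytope: the convex hull of the indicator vectors of the members of `M`. -/
def matroidPolytope {S : Type} [DecidableEq S] (M : Finset (Finset S)) : Set (S → ℝ) :=
  convexHull ℝ (delta '' (M : Set (Finset S)))

/-- The hypersimplex `Δ_{S,k}`: the convex hull of all `δ_B` with `|B| = k`. -/
def hypersimplex (S : Type) [DecidableEq S] (k : ℕ) : Set (S → ℝ) :=
  convexHull ℝ (delta '' {B : Finset S | B.card = k})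

/-- `E` is an edge (a one-dimensional face) of the polytope `P`. -/
def IsEdgeOf {S : Type} (P E : Set (S → ℝ)) : Prop :=
  IsExposed ℝ P E ∧ Module.finrank ℝ (affineSpan ℝ E).direction = 1

/-- The dimension of a polytope: the dimension of its affine span. -/
noncomputable def polyDim {S : Type} (P : Set (S → ℝ)) : ℕ :=
  Module.finrank ℝ (affineSpan ℝ P).direction

/-- A polytope `P` of dimension `d` is simple at a vertex `v` if `v` lies on exactly `d` edges. -/
def IsSimpleAt {S : Type} (P : Set (S → ℝ)) (v : S → ℝ) : Prop :=
  {E : Set (S → ℝ) | IsEdgeOf P E ∧ v ∈ E}.ncard = polyDim P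

/-- A polytope is simple if it is simple at every vertex. -/
def IsSimplePolytope {S : Type} (P : Set (S → ℝ)) : Prop :=
  ∀ v ∈ Set.extremePoints ℝ P, IsSimpleAt P v

/-- The hypersimplex `Δ_{J,k}` on the subset `J` of `S`, viewed inside `ℝ^S`:
the convex hull of all `δ_B` with `B ⊆ J`, `|B| = k`. -/
def hypersimplexOn {S : Type} [DecidableEq S] (J : Finset S) (k : ℕ) : Set (S → ℝ) :=
  convexHull ℝ (delta '' {B : Finset S | B ⊆ J ∧ B.card = k})

/-!
Every `δ_I` is a vertex of the unit cube, hence of any convex hull of such vectors containing it,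
so the vertices of the polytope are exactly the `δ_I` with `I ∈ M`. Since `d` points span an
affine space of dimension at most `d - 1`, there are at least three of them. Conversely, a
`2`-dimensional space `W` of vectors is determined by two coordinates (the coordinate functionals
span its dual), so two distinct `0/1` points of a plane with direction `W` differ in one of two
fixed coordinates, and there are at most `2 ^ 2` of them.
-/

theorem Submodule.exists_finset_card_le_finrank_vanishing_imp_eq_zero {K ι : Type*} [Field K]
    (W : Submodule K (ι → K)) [FiniteDimensional K W] :
    ∃ C : Finset ι, #C ≤ finrank K W ∧ ∀ w ∈ W, (∀ i ∈ C, w i = 0) → w = 0 := by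
  classical
  let coord : ι → Dual K W := fun i => (LinearMap.proj i).comp W.subtype
  obtain ⟨κ, a, -, hspan, hli⟩ := exists_linearIndependent' K coord
  have : Fintype κ := @Fintype.ofFinite κ hli.finite
  refine ⟨univ.image a, ?_, fun w hw hC => funext fun i => ?_⟩
  · calc #(univ.image a) ≤ Fintype.card κ := card_image_le
      _ ≤ finrank K (Dual K W) := hli.fintype_card_le_finrank
      _ = finrank K W := Subspace.dual_finrank_eq
  · have hle : Submodule.span K (Set.range (coord ∘ a)) ≤ LinearMap.ker (Dual.eval K W ⟨w, hw⟩) :=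
      Submodule.span_le.2 <| by
        rintro _ ⟨j, rfl⟩
        exact hC _ (mem_image_of_mem a (mem_univ j))
    exact hle (hspan ▸ Submodule.subset_span (Set.mem_range_self i))

theorem finrank_vectorSpan_image_finset_le_card_sub_one {k V P ι : Type*} [DivisionRing k]
    [AddCommGroup V] [Module k V] [AddTorsor V P] [DecidableEq P] (p : ι → P) (s : Finset ι) :
    finrank k (vectorSpan k (s.image p : Set P)) ≤ #s - 1 := by
  rcases s.eq_empty_or_nonempty with rfl | hs
  · rw [image_empty, coe_empty, vectorSpan_empty, finrank_bot]
    exact Nat.zero_le _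
  · exact finrank_vectorSpan_image_finset_le k p s (Nat.succ_pred_eq_of_pos hs.card_pos).symm

section delta

variable {S : Type} [DecidableEq S]

theorem delta_injective : Function.Injective (delta (S := S)) := by
  intro I J h
  ext i
  have hi := congrFun h i
  by_cases hI : i ∈ I <;> by_cases hJ : i ∈ J <;> simp_all [delta]

theorem extremePoints_convexHull_image_delta (s : Set (Finset S)) :
    Set.extremePoints ℝ (convexHull ℝ (delta '' s)) = delta '' s := by
  let cube : Set (S → ℝ) := Set.univ.pi fun _ => Set.Icc 0 1
  have hcube : convexHull ℝ (delta '' s) ⊆ cube := by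
    refine convexHull_min ?_ (convex_pi fun _ _ => convex_Icc 0 1)
    rintro _ ⟨I, -, rfl⟩ i -
    by_cases hi : i ∈ I <;> simp [delta, hi]
  refine extremePoints_convexHull_subset.antisymm ?_
  rintro _ ⟨I, hI, rfl⟩
  refine inter_extremePoints_subset_extremePoints_of_subset hcube
    ⟨subset_convexHull ℝ _ ⟨I, hI, rfl⟩, ?_⟩
  simp only [cube, extremePoints_pi, Set.extremePoints_Icc zero_le_one]
  rintro i -
  by_cases hi : i ∈ I <;> simp [delta, hi]

theorem card_le_two_pow_finrank_vectorSpan_image_delta (M : Finset (Finset S)) :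
    #M ≤ 2 ^ finrank ℝ (vectorSpan ℝ (delta '' (M : Set (Finset S)))) := by
  have := finiteDimensional_vectorSpan_of_finite ℝ (M.finite_toSet.image delta)
  obtain ⟨C, hC, hzero⟩ :=
    (vectorSpan ℝ (delta '' (M : Set (Finset S)))).exists_finset_card_le_finrank_vanishing_imp_eq_zero
  have hinj : Set.InjOn (· ∩ C) (M : Set (Finset S)) := by
    intro I hI J hJ hIJ
    refine delta_injective (sub_eq_zero.1 (hzero _ ?_ fun i hi => ?_))
    · exact vsub_mem_vectorSpan ℝ ⟨I, hI, rfl⟩ ⟨J, hJ, rfl⟩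
    · have hiIJ : i ∈ I ↔ i ∈ J := by simpa [hi] using Finset.ext_iff.1 hIJ i
      simp [delta, hiIJ]
  calc #M ≤ #C.powerset :=
        card_le_card_of_injOn (· ∩ C) (fun I _ => mem_powerset.2 inter_subset_right) hinj
    _ ≤ _ := by rw [card_powerset]; exact Nat.pow_le_pow_right two_pos hC

end delta

theorem two_dimensional_matroid_polytope_triangle_or_square_general
    (S : Type) [DecidableEq S]
    (M : Finset (Finset S))
    (hdim : polyDim (matroidPolytope M) = 2) :
    (Set.extremePoints ℝ (matroidPolytope M)).ncard = 3 ∨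
    (Set.extremePoints ℝ (matroidPolytope M)).ncard = 4 := by
  classical
  have hvert : (Set.extremePoints ℝ (matroidPolytope M)).ncard = #M := by
    rw [matroidPolytope, extremePoints_convexHull_image_delta,
      Set.ncard_image_of_injective _ delta_injective, Set.ncard_coe_finset]
  have hrank : finrank ℝ (vectorSpan ℝ (delta '' (M : Set (Finset S)))) = 2 := by
    rwa [polyDim, matroidPolytope, affineSpan_convexHull, direction_affineSpan] at hdim
  have hlower : 2 ≤ #M - 1 := by
    have := finrank_vectorSpan_image_finset_le_card_sub_one (k := ℝ) delta M
    rwa [coe_image, hrank] at this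
  have hupper : #M ≤ 2 ^ 2 := hrank ▸ card_le_two_pow_finrank_vectorSpan_image_delta M
  omega

/-- Every two-dimensional matroid polytope has exactly `3` or exactly `4` vertices, i.e. it is
combinatorially equivalent to a triangle or a square. -/
theorem two_dimensional_matroid_polytope_triangle_or_square
    (S : Type) [Fintype S] [DecidableEq S] (k : ℕ)
    (M : Finset (Finset S)) (hM : IsMatroid k M)
    (hdim : polyDim (matroidPolytope M) = 2) :
    (Set.extremePoints ℝ (matroidPolytope M)).ncard = 3 ∨
    (Set.extremePoints ℝ (matroidPolytope M)).ncard = 4 :=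
  two_dimensional_matroid_polytope_triangle_or_square_general S M hdim
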